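/- arXiv:1804.04704 — 4 statements merged into one kernel-verified Lean document; each statement's English description precedes it below -/
import Mathlib

section
/- Let i, j, t, x be positive integers with i ∣ m, j ∣ n, t ∣ (m/i), t ∣ (n/j), gcd(x, t) = 1 and 1 ≤ x ≤ t. Then the set H_{i,j,t,x} = { (α^{a i}, β^{b j}) : a, b ∈ ℤ, b ≡ a x (mod t) } is a subgroup of 𝕌_m × 𝕌_n; moreover the defining condition is well defined: if α^{a₁ i} = α^{a₂ i} and β^{b₁ j} = β^{b₂ j}, then b₁ − a₁ x ≡ b₂ − a₂ x (mod t). -/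
open MvPolynomial Finset Pointwise

noncomputable section

namespace DuttaPaper

/-- The polynomial ring `K[X,Y]`, with `X = X 0` and `Y = X 1`. -/
abbrev Poly (K : Type) [Field K] : Type := MvPolynomial (Fin 2) K

/-- The rational function field `K(X,Y)`. -/
abbrev RF (K : Type) [Field K] : Type := FractionRing (Poly K)

variable {K : Type} [Field K]

/-- The `K`-algebra endomorphism of `K[X,Y]` sending `X ↦ u • X`, `Y ↦ v • Y`;
this is the action of `(u,v) ∈ 𝕌_m × 𝕌_n` on `K[X,Y]`. -/
def act (u v : K) : Poly K →ₐ[K] Poly K :=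
  MvPolynomial.aeval ![MvPolynomial.C u * MvPolynomial.X 0,
    MvPolynomial.C v * MvPolynomial.X 1]

/-- Membership in the set `H_{i,j,t,x} = {(α^{a i}, β^{b j}) : b ≡ a x (mod t)} ⊆ K × K`. -/
def Hmem (α β : K) (i j t x : ℕ) (p : K × K) : Prop :=
  ∃ a b : ℤ, b ≡ a * (x : ℤ) [ZMOD (t : ℤ)] ∧
    p = (α ^ (a * (i : ℤ)), β ^ (b * (j : ℤ)))

/-- `f ∈ K[X,Y]` is an eigenfunction for `H_{i,j,t,x}`. -/
def IsEigen (α β : K) (i j t x : ℕ) (f : Poly K) : Prop :=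
  ∀ p : K × K, Hmem α β i j t x p → ∃ lam : K, act p.1 p.2 f = lam • f

/-- `f ∈ K[X,Y]` belongs to the invariant ring `A_{i,j,t,x} = K[X,Y]^{H_{i,j,t,x}}`. -/
def Invariant (α β : K) (i j t x : ℕ) (f : Poly K) : Prop :=
  ∀ p : K × K, Hmem α β i j t x p → act p.1 p.2 f = f

/-- A `ℚ`-valued (rational rank 1) valuation on a field `L`: the data of the values of the
nonzero elements (the value of `0` is irrelevant). -/
structure RatVal (L : Type) [Field L] where
  v : L → ℚ
  v_mul : ∀ a b : L, a ≠ 0 → b ≠ 0 → v (a * b) = v a + v b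
  v_add : ∀ a b : L, a ≠ 0 → b ≠ 0 → a + b ≠ 0 → min (v a) (v b) ≤ v (a + b)

/-- Value of a polynomial under a valuation of `K(X,Y)`. -/
def vP (ν : RatVal (RF K)) (f : Poly K) : ℚ :=
  ν.v (algebraMap (Poly K) (RF K) f)

/-- `ν` dominates `R_𝔪 = K[X,Y]_{(X,Y)}` : `ν ≥ 0` on `R_𝔪` and `ν > 0` on its maximal
ideal (expressed on the level of polynomials). -/
def DominatesRm (ν : RatVal (RF K)) : Prop :=
  (∀ f : Poly K, f ≠ 0 → 0 ≤ vP ν f) ∧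
  (∀ f : Poly K, f ≠ 0 → MvPolynomial.constantCoeff f = 0 → 0 < vP ν f)

/-- `ν` is non-discrete: its value group is not a cyclic subgroup of `ℚ`. -/
def Nondiscrete (ν : RatVal (RF K)) : Prop :=
  ¬ ∃ g : ℚ, ∀ z : RF K, z ≠ 0 → ∃ k : ℤ, ν.v z = (k : ℚ) * g

/-- Data of a candidate generating sequence: the polynomials `Q_l` and the numbers `m̄_l`. -/
structure GSData (K : Type) [Field K] where
  Q : ℕ → Poly K
  mbar : ℕ → ℕ

/-- `γ_l = ν(Q_l)`. -/
def GSData.γ (G : GSData K) (ν : RatVal (RF K)) (l : ℕ) : ℚ := vP ν (G.Q l)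

/-- `d(l) = m̄_1 ⋯ m̄_{l-1}` (so `d(1) = 1`). -/
def GSData.d (G : GSData K) (l : ℕ) : ℕ := ∏ k ∈ Finset.Icc 1 (l - 1), G.mbar k

/-- An exponent vector `e` is admissible when `e k < m̄_k` for all `k ≥ 1`. -/
def Adm (G : GSData K) (e : ℕ →₀ ℕ) : Prop := ∀ k, 1 ≤ k → e k < G.mbar k

/-- The monomial `X^{e 0} Q_1^{e 1} Q_2^{e 2} ⋯` in the generating sequence. -/
def Pmon (G : GSData K) (e : ℕ →₀ ℕ) : Poly K := e.prod fun k a => G.Q k ^ a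

/-- The value `Σ_k e k • γ_k` of such a monomial. -/
def evalγ (ν : RatVal (RF K)) (G : GSData K) (e : ℕ →₀ ℕ) : ℚ :=
  e.sum fun k a => (a : ℚ) * G.γ ν k

/-- `(Q_l)_{l≥0}` is a generating sequence for `ν` in `K[X,Y]` (properties (1)–(4) of
Section 2 of the paper, for the algorithm of Cutkosky–Vinh). -/
structure IsGenSeq (ν : RatVal (RF K)) (G : GSData K) : Prop where
  hQ0 : G.Q 0 = MvPolynomial.X 0
  hQ1 : G.Q 1 = MvPolynomial.X 1
  /-- `m̄_l ≥ 1`. -/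
  hmbar_pos : ∀ l, 1 ≤ l → 0 < G.mbar l
  /-- `m̄_l γ_l ∈ G(γ_0, …, γ_{l-1})`. -/
  hmbar_mem : ∀ l, 1 ≤ l → ∃ c : ℕ → ℤ,
      (G.mbar l : ℚ) * G.γ ν l = ∑ k ∈ Finset.range l, (c k : ℚ) * G.γ ν k
  /-- `m̄_l` is minimal with this property. -/
  hmbar_min : ∀ l, 1 ≤ l → ∀ q : ℕ, 0 < q →
      (∃ c : ℕ → ℤ, (q : ℚ) * G.γ ν l = ∑ k ∈ Finset.range l, (c k : ℚ) * G.γ ν k) →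
      G.mbar l ≤ q
  /-- (1) `γ_{l+1} > m̄_l γ_l`. -/
  hgrowth : ∀ l, 1 ≤ l → (G.mbar l : ℚ) * G.γ ν l < G.γ ν (l + 1)
  /-- (2) `Q_l = Y^{d(l)} + (terms of lower Y-degree)`. -/
  hmonic : ∀ l, 1 ≤ l →
      G.Q l - MvPolynomial.X 1 ^ G.d l = 0 ∨
      MvPolynomial.degreeOf 1 (G.Q l - MvPolynomial.X 1 ^ G.d l) < G.d l
  /-- (3), existence and uniqueness of the expansion of any nonzero `f` in terms of the
  admissible monomials `X^{e 0} Q_1^{e 1} ⋯ Q_r^{e r}`, `e k < m̄_k` for `k ≥ 1`. -/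
  hexpand : ∀ f : Poly K, f ≠ 0 →
      ∃! c : (ℕ →₀ ℕ) →₀ K,
        (∀ e ∈ c.support, Adm G e) ∧
        f = c.sum fun e a => MvPolynomial.C a * Pmon G e
  /-- (3), the nonzero terms of the expansion have pairwise distinct values and
  `ν(f)` is the minimum of those values. -/
  hval : ∀ f : Poly K, f ≠ 0 → ∀ c : (ℕ →₀ ℕ) →₀ K,
      (∀ e ∈ c.support, Adm G e) →
      f = (c.sum fun e a => MvPolynomial.C a * Pmon G e) →
      (∀ e ∈ c.support, ∀ e' ∈ c.support, evalγ ν G e = evalγ ν G e' → e = e') ∧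
      ∃ e₀ ∈ c.support, vP ν f = evalγ ν G e₀ ∧
        ∀ e ∈ c.support, evalγ ν G e₀ ≤ evalγ ν G e
  /-- (4) `Q_{l+1} = Q_l^{m̄_l} - λ_l X^{c_0} Y^{c_1} Q_2^{c_2} ⋯ Q_{l-1}^{c_{l-1}}` with
  `0 ≤ c_k < m̄_k` for `k ≥ 1` and `m̄_l γ_l = Σ_{k<l} c_k γ_k`. -/
  hrec : ∀ l, 1 ≤ l → ∃ lam : K, lam ≠ 0 ∧ ∃ cc : ℕ → ℕ,
      (∀ k, 1 ≤ k → k < l → cc k < G.mbar k) ∧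
      G.Q (l + 1) =
        G.Q l ^ G.mbar l - MvPolynomial.C lam * ∏ k ∈ Finset.range l, G.Q k ^ cc k ∧
      (G.mbar l : ℚ) * G.γ ν l = ∑ k ∈ Finset.range l, (cc k : ℚ) * G.γ ν k

/-- The valuation semigroup `S^{R_𝔪}(ν) = {ν(h) : 0 ≠ h ∈ R_𝔪}`. -/
def SRm (ν : RatVal (RF K)) : Set ℚ :=
  {q | ∃ f g : Poly K, f ≠ 0 ∧ MvPolynomial.constantCoeff g ≠ 0 ∧
    q = vP ν f - vP ν g}

/-- The valuation semigroup `S^{(A_{i,j,t,x})_𝔫}(ν)` of the invariant ring localized at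
`𝔫 = (X,Y) ∩ A_{i,j,t,x}`. -/
def SA (ν : RatVal (RF K)) (α β : K) (i j t x : ℕ) : Set ℚ :=
  {q | ∃ f g : Poly K, f ≠ 0 ∧ Invariant α β i j t x f ∧ Invariant α β i j t x g ∧
    MvPolynomial.constantCoeff g ≠ 0 ∧ q = vP ν f - vP ν g}

/-- `S` is a finitely generated module over the subsemigroup `T`:
`S = {s_1, …, s_k} + T` for finitely many `s_i ∈ S`. -/
def FGover (S T : Set ℚ) : Prop :=
  ∃ F : Finset ℚ, (F : Set ℚ) ⊆ S ∧ S = (F : Set ℚ) + T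


section PrimitiveRoot

variable {G₀ : Type*} [CommGroupWithZero G₀] {ζ : G₀} {k : ℕ}

theorem _root_.IsPrimitiveRoot.zpow_eq_zpow_iff_modEq (hζ : IsPrimitiveRoot ζ k)
    (hζ0 : ζ ≠ 0) {a b : ℤ} : ζ ^ a = ζ ^ b ↔ a ≡ b [ZMOD k] := by
  rw [← div_eq_one_iff_eq (zpow_ne_zero b hζ0), ← zpow_sub₀ hζ0, hζ.zpow_eq_one_iff_dvd,
    Int.modEq_comm, Int.modEq_iff_dvd]

theorem _root_.IsPrimitiveRoot.modEq_of_zpow_mul_eq (hζ : IsPrimitiveRoot ζ k)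
    (hζ0 : ζ ≠ 0) {i : ℕ} (hi : i ≠ 0) (hik : i ∣ k) {a₁ a₂ : ℤ}
    (h : ζ ^ (a₁ * i) = ζ ^ (a₂ * i)) :
    a₁ ≡ a₂ [ZMOD (k / i : ℕ)] := by
  simp only [zpow_mul', zpow_natCast] at h
  exact ((hζ.pow_of_dvd hi hik).zpow_eq_zpow_iff_modEq (pow_ne_zero i hζ0)).mp h

end PrimitiveRoot

section Hmem

variable {α β : K} {i j t x : ℕ}

theorem hmem_one : Hmem α β i j t x (1, 1) :=
  ⟨0, 0, by simp [Int.ModEq], by simp⟩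

theorem Hmem.mul (hα : α ≠ 0) (hβ : β ≠ 0) {p q : K × K} (hp : Hmem α β i j t x p)
    (hq : Hmem α β i j t x q) : Hmem α β i j t x (p.1 * q.1, p.2 * q.2) := by
  obtain ⟨a, b, hab, rfl⟩ := hp
  obtain ⟨a', b', hab', rfl⟩ := hq
  refine ⟨a + a', b + b', add_mul a a' x ▸ hab.add hab', ?_⟩
  simp only [add_mul, zpow_add₀ hα, zpow_add₀ hβ]

theorem Hmem.inv {p : K × K} (hp : Hmem α β i j t x p) :
    Hmem α β i j t x (p.1⁻¹, p.2⁻¹) := by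
  obtain ⟨a, b, hab, rfl⟩ := hp
  refine ⟨-a, -b, neg_mul a x ▸ hab.neg, ?_⟩
  simp only [neg_mul, zpow_neg]

end Hmem

theorem stmt_0_general (K : Type) [Field K]
    (m n : ℕ) (hm : 0 < m) (hn : 0 < n) (α β : K)
    (hα : IsPrimitiveRoot α m) (hβ : IsPrimitiveRoot β n)
    (i j t x : ℕ) (hi : 0 < i) (hj : 0 < j)
    (him : i ∣ m) (hjn : j ∣ n) (hti : t ∣ m / i) (htj : t ∣ n / j) :
    -- `H` contains the identity
    Hmem α β i j t x ((1 : K), (1 : K)) ∧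
    -- `H` is closed under multiplication
    (∀ p q : K × K, Hmem α β i j t x p → Hmem α β i j t x q →
        Hmem α β i j t x (p.1 * q.1, p.2 * q.2)) ∧
    -- `H` is closed under inverses
    (∀ p : K × K, Hmem α β i j t x p → Hmem α β i j t x (p.1⁻¹, p.2⁻¹)) ∧
    -- `H ⊆ 𝕌_m × 𝕌_n`
    (∀ p : K × K, Hmem α β i j t x p → ∃ a b : ℤ, p = (α ^ a, β ^ b)) ∧
    -- the defining congruence condition is well defined
    (∀ a₁ a₂ b₁ b₂ : ℤ, α ^ (a₁ * (i : ℤ)) = α ^ (a₂ * (i : ℤ)) →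
        β ^ (b₁ * (j : ℤ)) = β ^ (b₂ * (j : ℤ)) →
        b₁ - a₁ * (x : ℤ) ≡ b₂ - a₂ * (x : ℤ) [ZMOD (t : ℤ)]) := by
  have hα0 : α ≠ 0 := hα.ne_zero hm.ne'
  have hβ0 : β ≠ 0 := hβ.ne_zero hn.ne'
  refine ⟨hmem_one, fun p q hp hq ↦ hp.mul hα0 hβ0 hq, fun p hp ↦ hp.inv, ?_, ?_⟩
  · rintro p ⟨a, b, -, rfl⟩
    exact ⟨a * i, b * j, rfl⟩
  · intro a₁ a₂ b₁ b₂ ha hb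
    have ha' : a₁ ≡ a₂ [ZMOD t] := (hα.modEq_of_zpow_mul_eq hα0 hi.ne' him ha).of_dvd
      (Int.natCast_dvd_natCast.mpr hti)
    have hb' : b₁ ≡ b₂ [ZMOD t] := (hβ.modEq_of_zpow_mul_eq hβ0 hj.ne' hjn hb).of_dvd
      (Int.natCast_dvd_natCast.mpr htj)
    exact hb'.sub (ha'.mul_right x)

/-- `H_{i,j,t,x}` is a well-defined subgroup of `𝕌_m × 𝕌_n`. -/
theorem stmt_0 (K : Type) [Field K] [IsAlgClosed K] [CharZero K]
    (m n : ℕ) (hm : 0 < m) (hn : 0 < n) (α β : K)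
    (hα : IsPrimitiveRoot α m) (hβ : IsPrimitiveRoot β n)
    (i j t x : ℕ) (hi : 0 < i) (hj : 0 < j) (ht : 0 < t)
    (him : i ∣ m) (hjn : j ∣ n) (hti : t ∣ m / i) (htj : t ∣ n / j)
    (hxt : Nat.gcd x t = 1) (hx1 : 1 ≤ x) (hxle : x ≤ t) :
    -- `H` contains the identity
    Hmem α β i j t x ((1 : K), (1 : K)) ∧
    -- `H` is closed under multiplication
    (∀ p q : K × K, Hmem α β i j t x p → Hmem α β i j t x q →
        Hmem α β i j t x (p.1 * q.1, p.2 * q.2)) ∧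
    -- `H` is closed under inverses
    (∀ p : K × K, Hmem α β i j t x p → Hmem α β i j t x (p.1⁻¹, p.2⁻¹)) ∧
    -- `H ⊆ 𝕌_m × 𝕌_n`
    (∀ p : K × K, Hmem α β i j t x p → ∃ a b : ℤ, p = (α ^ a, β ^ b)) ∧
    -- the defining congruence condition is well defined
    (∀ a₁ a₂ b₁ b₂ : ℤ, α ^ (a₁ * (i : ℤ)) = α ^ (a₂ * (i : ℤ)) →
        β ^ (b₁ * (j : ℤ)) = β ^ (b₂ * (j : ℤ)) →
        b₁ - a₁ * (x : ℤ) ≡ b₂ - a₂ * (x : ℤ) [ZMOD (t : ℤ)]) :=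
  stmt_0_general K m n hm hn α β hα hβ i j t x hi hj him hjn hti htj

end DuttaPaper
end
end

section
/- For every subgroup G of 𝕌_m × 𝕌_n there exist positive integers i, j, t, x with i ∣ m, j ∣ n, t ∣ (m/i), t ∣ (n/j), gcd(x, t) = 1 and 1 ≤ x ≤ t such that G = H_{i,j,t,x} = { (α^{a i}, β^{b j}) : a, b ∈ ℤ, b ≡ a x (mod t) }, and the quadruple (i, j, t, x) with these properties is unique. -/
open MvPolynomial Finset Pointwise

noncomputable section

namespace DuttaPaper

variable {K : Type} [Field K]

/-!
Under `(k, l) ↦ (α ^ k, β ^ l)` a subgroup `G ≤ 𝕌_m × 𝕌_n` is the image of its exponent lattice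
`L ≤ ℤ²`, and `H_{i,j,t,x}` is the image of `{(a i, b j) : b ≡ a x (mod t)}`; lattices containing
the kernel `mℤ × nℤ` are determined by their images. Such an `L` is of the latter form: `i` and `j`
generate its two projections, `j t` generates `L ∩ (0 × ℤ)`, and `x` is the residue mod `t` of any
`y` with `(i, j y) ∈ L`. These invariants are read off `L`, which gives uniqueness, and the
divisibility conditions on `(i, j, t, x)` say exactly that `(m, 0)` and `(0, n)` lie in the lattice.
-/

section ExpLattice

variable {A B : Type*} [Group A] [Group B] (a : A) (b : B)

def expLattice (G : Subgroup (A × B)) : AddSubgroup (ℤ × ℤ) where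
  carrier := {P | (a ^ P.1, b ^ P.2) ∈ G}
  zero_mem' := by simp [Prod.mk_one_one]
  add_mem' {P Q} hP hQ := by simpa [zpow_add] using G.mul_mem hP hQ
  neg_mem' {P} hP := by simpa using G.inv_mem hP

variable {a b}

theorem mem_expLattice {G : Subgroup (A × B)} {P : ℤ × ℤ} :
    P ∈ expLattice a b G ↔ (a ^ P.1, b ^ P.2) ∈ G := Iff.rfl

theorem image_expLattice {G : Subgroup (A × B)}
    (hG : G ≤ (Subgroup.zpowers a).prod (Subgroup.zpowers b)) :
    (fun P : ℤ × ℤ => (a ^ P.1, b ^ P.2)) '' expLattice a b G = G := by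
  refine Set.Subset.antisymm (Set.image_subset_iff.mpr fun P hP => hP) fun u hu => ?_
  obtain ⟨⟨k, hk⟩, ⟨l, hl⟩⟩ := Subgroup.mem_prod.mp (hG hu)
  exact ⟨(k, l), by simpa [mem_expLattice, hk, hl] using hu, by simp [hk, hl]⟩

theorem mem_of_zpow_mem_image {L : AddSubgroup (ℤ × ℤ)}
    (hker : ∀ P : ℤ × ℤ, (a ^ P.1, b ^ P.2) = 1 → P ∈ L) {P : ℤ × ℤ}
    (hP : (a ^ P.1, b ^ P.2) ∈ (fun Q : ℤ × ℤ => (a ^ Q.1, b ^ Q.2)) '' L) : P ∈ L := by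
  obtain ⟨Q, hQ, hQP⟩ := hP
  obtain ⟨h1, h2⟩ := Prod.mk.inj hQP
  have hdiff : P - Q ∈ L := hker _ (by simp [zpow_sub, ← h1, ← h2])
  simpa using L.add_mem hQ hdiff

theorem coe_eq_image_iff_expLattice_eq {G : Subgroup (A × B)}
    (hG : G ≤ (Subgroup.zpowers a).prod (Subgroup.zpowers b)) {L : AddSubgroup (ℤ × ℤ)}
    (hker : ∀ P : ℤ × ℤ, (a ^ P.1, b ^ P.2) = 1 → P ∈ L) :
    (G : Set (A × B)) = (fun P : ℤ × ℤ => (a ^ P.1, b ^ P.2)) '' L ↔ expLattice a b G = L := by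
  refine ⟨fun h => ?_, fun h => by rw [← h, image_expLattice hG]⟩
  ext P
  rw [mem_expLattice, ← SetLike.mem_coe, h]
  exact ⟨mem_of_zpow_mem_image hker, Set.mem_image_of_mem _⟩

end ExpLattice

theorem mem_of_dvd_of_dvd {L : AddSubgroup (ℤ × ℤ)} {m n : ℤ} (hmL : (m, 0) ∈ L)
    (hnL : (0, n) ∈ L) {P : ℤ × ℤ} (hP : m ∣ P.1 ∧ n ∣ P.2) : P ∈ L := by
  obtain ⟨⟨k, hk⟩, ⟨l, hl⟩⟩ := hP
  convert L.add_mem (L.zsmul_mem hmL k) (L.zsmul_mem hnL l) using 1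
  ext <;> simp [hk, hl, mul_comm]

section HLattice

def hLattice (i j t x : ℕ) : AddSubgroup (ℤ × ℤ) where
  carrier := {P | ∃ a b : ℤ, b ≡ a * x [ZMOD t] ∧ P = (a * i, b * j)}
  zero_mem' := ⟨0, 0, by simp, by ext <;> simp⟩
  add_mem' := by
    rintro _ _ ⟨a, b, hab, rfl⟩ ⟨a', b', hab', rfl⟩
    exact ⟨a + a', b + b', by simpa [add_mul] using hab.add hab', by simp [add_mul]⟩
  neg_mem' := by
    rintro _ ⟨a, b, hab, rfl⟩
    exact ⟨-a, -b, by simpa using hab.neg, by simp⟩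

variable {i j t x : ℕ}

theorem mk_mul_mem_hLattice_iff (hi : i ≠ 0) (hj : j ≠ 0) {a b : ℤ} :
    (a * i, b * j) ∈ hLattice i j t x ↔ b ≡ a * x [ZMOD t] := by
  refine ⟨fun ⟨a', b', hab', h⟩ => ?_, fun h => ⟨a, b, h, rfl⟩⟩
  obtain ⟨ha, hb⟩ := Prod.mk.inj h
  rwa [mul_right_cancel₀ (by exact_mod_cast hi) ha, mul_right_cancel₀ (by exact_mod_cast hj) hb]

theorem exists_mem_hLattice_iff_dvd_fst {A : ℤ} :
    (∃ B, (A, B) ∈ hLattice i j t x) ↔ (i : ℤ) ∣ A := by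
  refine ⟨fun ⟨B, a, b, _, h⟩ => ⟨a, by rw [(Prod.mk.inj h).1, mul_comm]⟩, ?_⟩
  rintro ⟨a, rfl⟩
  exact ⟨a * x * j, a, a * x, rfl, by rw [mul_comm]⟩

theorem exists_mem_hLattice_iff_dvd_snd (hx : x.Coprime t) {B : ℤ} :
    (∃ A, (A, B) ∈ hLattice i j t x) ↔ (j : ℤ) ∣ B := by
  refine ⟨fun ⟨A, a, b, _, h⟩ => ⟨b, by rw [(Prod.mk.inj h).2, mul_comm]⟩, ?_⟩
  rintro ⟨b, rfl⟩
  obtain ⟨u, v, huv⟩ := Nat.isCoprime_iff_coprime.mpr hx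
  refine ⟨b * u * i, b * u, b, ?_, by rw [mul_comm (j : ℤ)]⟩
  exact (Int.modEq_iff_dvd.mpr ⟨b * v, by linear_combination -b * huv⟩).symm

theorem mk_zero_mem_hLattice_iff (hj : j ≠ 0) (hx : x.Coprime t) {A : ℤ} :
    (A, 0) ∈ hLattice i j t x ↔ ((i * t : ℕ) : ℤ) ∣ A := by
  constructor
  · rintro ⟨a, b, hab, h⟩
    obtain ⟨rfl, hb⟩ := Prod.mk.inj h
    rw [eq_comm, mul_eq_zero, Nat.cast_eq_zero, or_iff_left hj] at hb
    subst hb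
    have hta : (t : ℤ) ∣ a :=
      (Nat.isCoprime_iff_coprime.mpr hx).symm.dvd_of_dvd_mul_right (by simpa using hab.dvd)
    push_cast
    rw [mul_comm]
    exact mul_dvd_mul_right hta _
  · rintro ⟨c, rfl⟩
    refine ⟨t * c, 0, ?_, by ext <;> push_cast <;> ring⟩
    exact (Int.modEq_zero_iff_dvd.mpr ⟨c * x, by ring⟩).symm

theorem zero_mk_mem_hLattice_iff (hi : i ≠ 0) {B : ℤ} :
    (0, B) ∈ hLattice i j t x ↔ ((j * t : ℕ) : ℤ) ∣ B := by
  constructor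
  · rintro ⟨a, b, hab, h⟩
    obtain ⟨ha, rfl⟩ := Prod.mk.inj h
    rw [eq_comm, mul_eq_zero, Nat.cast_eq_zero, or_iff_left hi] at ha
    subst ha
    obtain ⟨c, rfl⟩ : (t : ℤ) ∣ b := by simpa using hab.dvd
    exact ⟨c, by push_cast; ring⟩
  · rintro ⟨c, rfl⟩
    refine ⟨0, t * c, ?_, by ext <;> push_cast <;> ring⟩
    simpa using Int.modEq_zero_iff_dvd.mpr ⟨c, rfl⟩

theorem mk_mem_hLattice : ((i : ℤ), (x * j : ℤ)) ∈ hLattice i j t x :=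
  ⟨1, x, by rw [one_mul], by rw [one_mul]⟩

theorem eq_of_dvd_iff_dvd {k l : ℕ} (h : ∀ A : ℤ, (k : ℤ) ∣ A ↔ (l : ℤ) ∣ A) : k = l :=
  Nat.dvd_antisymm (Int.natCast_dvd_natCast.mp ((h l).mpr dvd_rfl))
    (Int.natCast_dvd_natCast.mp ((h k).mp dvd_rfl))

theorem hLattice_inj {i' j' t' x' : ℕ} (hi : 0 < i) (hj : 0 < j) (hx : x.Coprime t)
    (hx1 : 1 ≤ x) (hxt : x ≤ t) (hi' : 0 < i') (hx' : x'.Coprime t') (hx1' : 1 ≤ x')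
    (hxt' : x' ≤ t') (h : hLattice i j t x = hLattice i' j' t' x') :
    i = i' ∧ j = j' ∧ t = t' ∧ x = x' := by
  obtain rfl : i = i' := eq_of_dvd_iff_dvd fun A => by
    rw [← exists_mem_hLattice_iff_dvd_fst, ← exists_mem_hLattice_iff_dvd_fst, h]
  obtain rfl : j = j' := eq_of_dvd_iff_dvd fun B => by
    rw [← exists_mem_hLattice_iff_dvd_snd hx, ← exists_mem_hLattice_iff_dvd_snd hx', h]
  obtain rfl : t = t' := Nat.eq_of_mul_eq_mul_left hj <| eq_of_dvd_iff_dvd fun B => by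
    rw [← zero_mk_mem_hLattice_iff hi.ne', ← zero_mk_mem_hLattice_iff hi.ne', h]
  have hxx' : (x : ℤ) ≡ 1 * x' [ZMOD t] := by
    rw [← mk_mul_mem_hLattice_iff hi.ne' hj.ne', ← h, one_mul]
    exact mk_mem_hLattice
  rw [one_mul, Int.natCast_modEq_iff] at hxx'
  exact ⟨rfl, rfl, rfl, hxx'.eq_of_abs_lt (abs_sub_lt_iff.mpr ⟨by omega, by omega⟩)⟩

theorem eq_hLattice_of_mem {L : AddSubgroup (ℤ × ℤ)} (hfst : ∀ P ∈ L, (i : ℤ) ∣ P.1)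
    (hbase : ((i : ℤ), (x * j : ℤ)) ∈ L) (hker : ∀ B : ℤ, (0, B) ∈ L ↔ ((j * t : ℕ) : ℤ) ∣ B) :
    L = hLattice i j t x := by
  ext ⟨A, B⟩
  constructor
  · intro hP
    obtain ⟨a, rfl⟩ := hfst _ hP
    obtain ⟨c, hc⟩ := (hker (B - a * (x * j))).mp <| by
      simpa [mul_comm] using L.sub_mem hP (L.zsmul_mem hbase a)
    refine ⟨a, a * x + t * c, (Int.modEq_iff_dvd.mpr ⟨c, by ring⟩).symm, ?_⟩
    ext
    · exact mul_comm _ _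
    · push_cast at hc; linear_combination hc
  · rintro ⟨a, b, hab, h⟩
    obtain ⟨c, hc⟩ := hab.dvd
    have hmem := L.sub_mem (L.zsmul_mem hbase a) (L.zsmul_mem ((hker (j * t)).mpr dvd_rfl) c)
    convert hmem using 1
    rw [h]
    simp only [Prod.smul_mk, smul_eq_mul, mul_zero, Prod.mk_sub_mk, sub_zero, Prod.mk.injEq,
      true_and]
    linear_combination -j * hc

theorem coprime_of_mk_mem_hLattice (hi : i ≠ 0) (hj : j ≠ 0) {A : ℤ}
    (h : (A, (j : ℤ)) ∈ hLattice i j t x) : x.Coprime t := by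
  obtain ⟨a, rfl⟩ := exists_mem_hLattice_iff_dvd_fst.mp ⟨_, h⟩
  rw [mul_comm, ← one_mul (j : ℤ), mk_mul_mem_hLattice_iff hi hj] at h
  obtain ⟨c, hc⟩ := h.dvd
  exact Nat.isCoprime_iff_coprime.mp ⟨a, -c, by linear_combination hc⟩

theorem exists_natCast_generator (H : AddSubgroup ℤ) : ∃ g : ℕ, ∀ A : ℤ, A ∈ H ↔ (g : ℤ) ∣ A := by
  obtain ⟨g, rfl⟩ := Int.subgroup_cyclic H
  refine ⟨g.natAbs, fun A => ?_⟩
  rw [← AddSubgroup.zmultiples_eq_closure, Int.mem_zmultiples_iff, Int.natAbs_dvd]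

theorem exists_modEq_of_mem_Icc {t : ℕ} (ht : 0 < t) (y : ℤ) :
    ∃ x : ℕ, 1 ≤ x ∧ x ≤ t ∧ (x : ℤ) ≡ y [ZMOD t] := by
  have h0 := Int.emod_nonneg (y - 1) (by omega : (t : ℤ) ≠ 0)
  have hlt := Int.emod_lt_of_pos (y - 1) (by omega : (0 : ℤ) < t)
  refine ⟨((y - 1) % t).toNat + 1, by omega, by omega, ?_⟩
  push_cast
  rw [Int.toNat_of_nonneg h0]
  simpa using (Int.mod_modEq (y - 1) t).add_right 1

theorem exists_eq_hLattice {m n : ℕ} (hm : 0 < m) (hn : 0 < n) {L : AddSubgroup (ℤ × ℤ)}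
    (hmL : ((m : ℤ), 0) ∈ L) (hnL : (0, (n : ℤ)) ∈ L) :
    ∃ i j t x : ℕ, 0 < i ∧ 0 < j ∧ 1 ≤ x ∧ x ≤ t ∧ x.Coprime t ∧ L = hLattice i j t x := by
  obtain ⟨i, hi⟩ := exists_natCast_generator (L.map (AddMonoidHom.fst ℤ ℤ))
  obtain ⟨j, hj⟩ := exists_natCast_generator (L.map (AddMonoidHom.snd ℤ ℤ))
  obtain ⟨s, hs⟩ := exists_natCast_generator (L.comap (AddMonoidHom.inr ℤ ℤ))
  have hfst : ∀ P ∈ L, (i : ℤ) ∣ P.1 := fun P hP => (hi _).mp ⟨P, hP, rfl⟩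
  have hsnd : ∀ P ∈ L, (j : ℤ) ∣ P.2 := fun P hP => (hj _).mp ⟨P, hP, rfl⟩
  have hi0 : 0 < i := Nat.pos_of_dvd_of_pos (Int.natCast_dvd_natCast.mp (hfst _ hmL)) hm
  have hj0 : 0 < j := Nat.pos_of_dvd_of_pos (Int.natCast_dvd_natCast.mp (hsnd _ hnL)) hn
  obtain ⟨t, rfl⟩ : j ∣ s := Int.natCast_dvd_natCast.mp (hsnd (0, s) ((hs s).mpr dvd_rfl))
  have ht0 : 0 < t :=
    Nat.pos_of_mul_pos_left (Nat.pos_of_dvd_of_pos (Int.natCast_dvd_natCast.mp ((hs n).mp hnL)) hn)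
  obtain ⟨⟨_, B⟩, hP, rfl⟩ := (hi i).mpr dvd_rfl
  obtain ⟨y, rfl⟩ := hsnd _ hP
  obtain ⟨x, hx1, hxt, hxy⟩ := exists_modEq_of_mem_Icc ht0 y
  have hbase : ((i : ℤ), (x * j : ℤ)) ∈ L := by
    obtain ⟨c, hc⟩ := hxy.symm.dvd
    have hshift : ((0 : ℤ), ((x : ℤ) - y) * j) ∈ L := (hs _).mpr ⟨c, by push_cast; rw [hc]; ring⟩
    convert L.add_mem hP hshift using 1
    rw [Prod.mk_add_mk, add_zero]
    congr 1
    ring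
  have hL : L = hLattice i j t x := eq_hLattice_of_mem hfst hbase hs
  obtain ⟨⟨A, _⟩, hA, rfl⟩ := (hj j).mpr dvd_rfl
  exact ⟨i, j, t, x, hi0, hj0, hx1, hxt,
    coprime_of_mk_mem_hLattice hi0.ne' hj0.ne' (hL ▸ hA), hL⟩

def IsNormalizedParam (m n : ℕ) (q : ℕ × ℕ × ℕ × ℕ) : Prop :=
  0 < q.1 ∧ 0 < q.2.1 ∧ 0 < q.2.2.1 ∧ 1 ≤ q.2.2.2 ∧
    q.1 ∣ m ∧ q.2.1 ∣ n ∧ q.2.2.1 ∣ m / q.1 ∧ q.2.2.1 ∣ n / q.2.1 ∧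
    Nat.gcd q.2.2.2 q.2.2.1 = 1 ∧ q.2.2.2 ≤ q.2.2.1

theorem mul_dvd_iff_dvd_and_dvd_div {a b c : ℕ} : a * b ∣ c ↔ a ∣ c ∧ b ∣ c / a :=
  ⟨fun h => ⟨dvd_of_mul_right_dvd h, (Nat.dvd_div_iff_mul_dvd (dvd_of_mul_right_dvd h)).mpr h⟩,
    fun ⟨h, h'⟩ => (Nat.dvd_div_iff_mul_dvd h).mp h'⟩

theorem isNormalizedParam_iff {m n : ℕ} :
    IsNormalizedParam m n (i, j, t, x) ↔ 0 < i ∧ 0 < j ∧ 1 ≤ x ∧ x ≤ t ∧ x.Coprime t ∧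
      ((m : ℤ), 0) ∈ hLattice i j t x ∧ (0, (n : ℤ)) ∈ hLattice i j t x := by
  simp only [IsNormalizedParam]
  constructor
  · rintro ⟨hi, hj, -, hx1, him, hjn, htm, htn, hx, hxt⟩
    refine ⟨hi, hj, hx1, hxt, hx, ?_, ?_⟩
    · rw [mk_zero_mem_hLattice_iff hj.ne' hx, Int.natCast_dvd_natCast]
      exact mul_dvd_iff_dvd_and_dvd_div.mpr ⟨him, htm⟩
    · rw [zero_mk_mem_hLattice_iff hi.ne', Int.natCast_dvd_natCast]
      exact mul_dvd_iff_dvd_and_dvd_div.mpr ⟨hjn, htn⟩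
  · rintro ⟨hi, hj, hx1, hxt, hx, hmL, hnL⟩
    rw [mk_zero_mem_hLattice_iff hj.ne' hx, Int.natCast_dvd_natCast,
      mul_dvd_iff_dvd_and_dvd_div] at hmL
    rw [zero_mk_mem_hLattice_iff hi.ne', Int.natCast_dvd_natCast,
      mul_dvd_iff_dvd_and_dvd_div] at hnL
    exact ⟨hi, hj, by omega, hx1, hmL.1, hnL.1, hmL.2, hnL.2, hx, hxt⟩

theorem existsUnique_isNormalizedParam_eq_hLattice {m n : ℕ} (hm : 0 < m) (hn : 0 < n)
    {L : AddSubgroup (ℤ × ℤ)} (hmL : ((m : ℤ), 0) ∈ L) (hnL : (0, (n : ℤ)) ∈ L) :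
    ∃! q : ℕ × ℕ × ℕ × ℕ,
      IsNormalizedParam m n q ∧ L = hLattice q.1 q.2.1 q.2.2.1 q.2.2.2 := by
  obtain ⟨i, j, t, x, hi, hj, hx1, hxt, hx, rfl⟩ := exists_eq_hLattice hm hn hmL hnL
  refine ⟨(i, j, t, x), ⟨isNormalizedParam_iff.mpr ⟨hi, hj, hx1, hxt, hx, hmL, hnL⟩, rfl⟩, ?_⟩
  rintro ⟨i', j', t', x'⟩ ⟨hq', hL⟩
  obtain ⟨hi', hj', hx1', hxt', hx', -, -⟩ := isNormalizedParam_iff.mp hq'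
  obtain ⟨rfl, rfl, rfl, rfl⟩ := hLattice_inj hi' hj' hx' hx1' hxt' hi hx hx1 hxt hL.symm
  rfl

end HLattice

theorem setOf_hmem_eq_image (α β : K) (i j t x : ℕ) :
    {p : K × K | Hmem α β i j t x p} =
      (fun P : ℤ × ℤ => (α ^ P.1, β ^ P.2)) '' hLattice i j t x := by
  ext p
  constructor
  · rintro ⟨a, b, hab, rfl⟩
    exact ⟨_, ⟨a, b, hab, rfl⟩, rfl⟩
  · rintro ⟨_, ⟨a, b, hab, rfl⟩, rfl⟩
    exact ⟨a, b, hab, rfl⟩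

theorem setOf_coe_eq_image_iff_expLattice_eq {α β : Kˣ} {G : Subgroup (Kˣ × Kˣ)}
    (hG : G ≤ (Subgroup.zpowers α).prod (Subgroup.zpowers β)) {L : AddSubgroup (ℤ × ℤ)}
    (hker : ∀ P : ℤ × ℤ, (α ^ P.1, β ^ P.2) = 1 → P ∈ L) :
    {p : K × K | ∃ u ∈ G, (((u : Kˣ × Kˣ).1 : K), ((u : Kˣ × Kˣ).2 : K)) = p} =
        (fun P : ℤ × ℤ => ((α : K) ^ P.1, (β : K) ^ P.2)) '' L ↔ expLattice α β G = L := by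
  have hval : Function.Injective (Prod.map Units.val Units.val : Kˣ × Kˣ → K × K) :=
    Units.val_injective.prodMap Units.val_injective
  rw [← coe_eq_image_iff_expLattice_eq hG hker, ← (Set.image_injective.mpr hval).eq_iff,
    Set.image_image]
  simp only [Prod.map, Units.val_zpow_eq_zpow_val]
  rfl

theorem stmt_1_general (K : Type) [Field K]
    (m n : ℕ) (hm : 0 < m) (hn : 0 < n) (α β : K)
    (hα : IsPrimitiveRoot α m) (hβ : IsPrimitiveRoot β n)
    (α' β' : Kˣ) (hα' : (α' : K) = α) (hβ' : (β' : K) = β)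
    (G : Subgroup (Kˣ × Kˣ))
    (hG : G ≤ (Subgroup.zpowers α').prod (Subgroup.zpowers β')) :
    ∃! q : ℕ × ℕ × ℕ × ℕ,
      0 < q.1 ∧ 0 < q.2.1 ∧ 0 < q.2.2.1 ∧ 1 ≤ q.2.2.2 ∧
      q.1 ∣ m ∧ q.2.1 ∣ n ∧ q.2.2.1 ∣ m / q.1 ∧ q.2.2.1 ∣ n / q.2.1 ∧
      Nat.gcd q.2.2.2 q.2.2.1 = 1 ∧ q.2.2.2 ≤ q.2.2.1 ∧
      {p : K × K | ∃ u ∈ G, (((u : Kˣ × Kˣ).1 : K), ((u : Kˣ × Kˣ).2 : K)) = p} =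
        {p : K × K | Hmem α β q.1 q.2.1 q.2.2.1 q.2.2.2 p} := by
  subst hα' hβ'
  have hker (P : ℤ × ℤ) : (α' ^ P.1, β' ^ P.2) = 1 ↔ (m : ℤ) ∣ P.1 ∧ (n : ℤ) ∣ P.2 := by
    rw [Prod.mk_eq_one, (IsPrimitiveRoot.coe_units_iff.mp hα).zpow_eq_one_iff_dvd,
      (IsPrimitiveRoot.coe_units_iff.mp hβ).zpow_eq_one_iff_dvd]
  have hmL : ((m : ℤ), 0) ∈ expLattice α' β' G := by
    rw [mem_expLattice, (hker _).mpr ⟨dvd_rfl, dvd_zero _⟩]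
    exact G.one_mem
  have hnL : (0, (n : ℤ)) ∈ expLattice α' β' G := by
    rw [mem_expLattice, (hker _).mpr ⟨dvd_zero _, dvd_rfl⟩]
    exact G.one_mem
  have key (q : ℕ × ℕ × ℕ × ℕ) (hq : IsNormalizedParam m n q) :
      {p : K × K | ∃ u ∈ G, (((u : Kˣ × Kˣ).1 : K), ((u : Kˣ × Kˣ).2 : K)) = p} =
          {p : K × K | Hmem (α' : K) β' q.1 q.2.1 q.2.2.1 q.2.2.2 p} ↔
        expLattice α' β' G = hLattice q.1 q.2.1 q.2.2.1 q.2.2.2 := by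
    obtain ⟨-, -, -, -, -, hmq, hnq⟩ := isNormalizedParam_iff.mp hq
    rw [setOf_hmem_eq_image]
    exact setOf_coe_eq_image_iff_expLattice_eq hG fun P hP =>
      mem_of_dvd_of_dvd hmq hnq ((hker P).mp hP)
  simpa only [IsNormalizedParam, and_assoc] using
    (existsUnique_congr fun q => and_congr_right (key q)).mpr
      (existsUnique_isNormalizedParam_eq_hLattice hm hn hmL hnL)

/-- every subgroup of `𝕌_m × 𝕌_n` is `H_{i,j,t,x}` for a unique quadruple
`(i,j,t,x)` satisfying the divisibility and coprimality conditions. -/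
theorem stmt_1 (K : Type) [Field K] [IsAlgClosed K] [CharZero K]
    (m n : ℕ) (hm : 0 < m) (hn : 0 < n) (α β : K)
    (hα : IsPrimitiveRoot α m) (hβ : IsPrimitiveRoot β n)
    (α' β' : Kˣ) (hα' : (α' : K) = α) (hβ' : (β' : K) = β)
    (G : Subgroup (Kˣ × Kˣ))
    (hG : G ≤ (Subgroup.zpowers α').prod (Subgroup.zpowers β')) :
    ∃! q : ℕ × ℕ × ℕ × ℕ,
      0 < q.1 ∧ 0 < q.2.1 ∧ 0 < q.2.2.1 ∧ 1 ≤ q.2.2.2 ∧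
      q.1 ∣ m ∧ q.2.1 ∣ n ∧ q.2.2.1 ∣ m / q.1 ∧ q.2.2.1 ∣ n / q.2.1 ∧
      Nat.gcd q.2.2.2 q.2.2.1 = 1 ∧ q.2.2.2 ≤ q.2.2.1 ∧
      {p : K × K | ∃ u ∈ G, (((u : Kˣ × Kˣ).1 : K), ((u : Kˣ × Kˣ).2 : K)) = p} =
        {p : K × K | Hmem α β q.1 q.2.1 q.2.2.1 q.2.2.2 p} :=
  stmt_1_general K m n hm hn α β hα hβ α' β' hα' hβ' G hG

end DuttaPaper
end
end

section
/- Suppose gcd(m/i, n/j) = t, and write m/i = M t and n/j = N t with M, N positive integers (so gcd(M, N) = 1). Then the subgroup H_{i,j,t,x} has order M N t. -/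
/-!
Put `ζ = α ^ i` and `η = β ^ j`, primitive roots of unity of orders `M t` and `N t`. Reducing
exponents, `H_{i,j,t,x}` is the injective image of the pairs `(a, b)` of residues modulo `M t`
and `N t` with `b ≡ a x (mod t)`, i.e. of the kernel of `(a, b) ↦ b - a x` onto `ZMod t`. This
homomorphism is surjective, so the kernel has `(M t)(N t) / t = M N t` elements.
-/

open MvPolynomial Finset Pointwise

noncomputable section

namespace IsPrimitiveRoot

variable {G₀ : Type*} [CommGroupWithZero G₀] {ζ : G₀} {k : ℕ}

theorem zpow_eq_zpow_iff_modEq_s2 (h : IsPrimitiveRoot ζ k) (hk : k ≠ 0) {a b : ℤ} :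
    ζ ^ a = ζ ^ b ↔ a ≡ b [ZMOD k] := by
  have hζ : ζ ≠ 0 := h.ne_zero hk
  rw [Int.modEq_iff_dvd, ← h.zpow_eq_one_iff_dvd, zpow_sub₀ hζ,
    div_eq_one_iff_eq (zpow_ne_zero _ hζ), eq_comm]

theorem zpow_eq_pow_val (h : IsPrimitiveRoot ζ k) [NeZero k] (a : ℤ) :
    ζ ^ a = ζ ^ (a : ZMod k).val := by
  rw [← zpow_natCast, h.zpow_eq_zpow_iff_modEq_s2 (NeZero.ne k), ← ZMod.intCast_eq_intCast_iff,
    Int.cast_natCast, ZMod.natCast_zmod_val]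

theorem pow_val_injective (h : IsPrimitiveRoot ζ k) [NeZero k] :
    Function.Injective fun a : ZMod k => ζ ^ a.val :=
  fun a b hab => ZMod.val_injective k (h.pow_inj (ZMod.val_lt a) (ZMod.val_lt b) hab)

end IsPrimitiveRoot

namespace ZMod

variable {t k l : ℕ}

def modEqDefectHom (hk : t ∣ k) (hl : t ∣ l) (x : ZMod t) : ZMod k × ZMod l →+ ZMod t where
  toFun q := castHom hl (ZMod t) q.2 - castHom hk (ZMod t) q.1 * x
  map_zero' := by simp
  map_add' q r := by simp only [Prod.fst_add, Prod.snd_add, map_add]; ring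

theorem modEqDefectHom_apply (hk : t ∣ k) (hl : t ∣ l) (x : ZMod t) (q : ZMod k × ZMod l) :
    modEqDefectHom hk hl x q = cast q.2 - cast q.1 * x :=
  rfl

theorem card_ker_modEqDefectHom_mul (hk : t ∣ k) (hl : t ∣ l)
    (x : ZMod t) : Nat.card (modEqDefectHom hk hl x).ker * t = k * l := by
  have hsurj : Function.Surjective (modEqDefectHom hk hl x) := fun c => by
    obtain ⟨b, rfl⟩ := castHom_surjective hl c
    exact ⟨(0, b), by simp [modEqDefectHom]⟩
  calc Nat.card (modEqDefectHom hk hl x).ker * t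
      = Nat.card (modEqDefectHom hk hl x).ker * (modEqDefectHom hk hl x).ker.index := by
        rw [AddSubgroup.index_ker, AddMonoidHom.range_eq_top_of_surjective _ hsurj,
          AddSubgroup.card_top, Nat.card_zmod]
    _ = k * l := by rw [AddSubgroup.card_mul_index, Nat.card_prod, Nat.card_zmod, Nat.card_zmod]

end ZMod

section

variable {G₀ : Type*} [CommGroupWithZero G₀] {ζ η : G₀} {M N t : ℕ}

theorem setOf_zpow_pair_modEq_eq_image [NeZero (M * t)] [NeZero (N * t)]
    (hζ : IsPrimitiveRoot ζ (M * t)) (hη : IsPrimitiveRoot η (N * t)) (x : ℤ) :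
    {p : G₀ × G₀ | ∃ a b : ℤ, b ≡ a * x [ZMOD t] ∧ p = (ζ ^ a, η ^ b)} =
      Prod.map (fun a : ZMod (M * t) => ζ ^ a.val) (fun b : ZMod (N * t) => η ^ b.val) ''
        (ZMod.modEqDefectHom (dvd_mul_left t M) (dvd_mul_left t N) x).ker := by
  ext p
  constructor
  · rintro ⟨a, b, hab, rfl⟩
    refine ⟨(a, b), ?_, Prod.ext (hζ.zpow_eq_pow_val a).symm (hη.zpow_eq_pow_val b).symm⟩
    rw [SetLike.mem_coe, AddMonoidHom.mem_ker, ZMod.modEqDefectHom_apply, sub_eq_zero,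
      ZMod.cast_intCast (dvd_mul_left t M), ZMod.cast_intCast (dvd_mul_left t N)]
    exact_mod_cast (ZMod.intCast_eq_intCast_iff _ _ _).mpr hab
  · rintro ⟨⟨a, b⟩, hker, rfl⟩
    refine ⟨a.val, b.val, ?_, by simp only [Prod.map_apply, zpow_natCast]⟩
    rw [SetLike.mem_coe, AddMonoidHom.mem_ker, ZMod.modEqDefectHom_apply, sub_eq_zero,
      ← ZMod.natCast_val, ← ZMod.natCast_val] at hker
    rw [← ZMod.intCast_eq_intCast_iff]
    exact_mod_cast hker

theorem ncard_setOf_zpow_pair_modEq (hζ : IsPrimitiveRoot ζ (M * t))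
    (hη : IsPrimitiveRoot η (N * t)) (hMt : M * t ≠ 0) (hNt : N * t ≠ 0) (x : ℤ) :
    {p : G₀ × G₀ | ∃ a b : ℤ, b ≡ a * x [ZMOD t] ∧ p = (ζ ^ a, η ^ b)}.ncard = M * N * t := by
  have : NeZero (M * t) := ⟨hMt⟩
  have : NeZero (N * t) := ⟨hNt⟩
  rw [setOf_zpow_pair_modEq_eq_image hζ hη x,
    Set.ncard_image_of_injective _ (hζ.pow_val_injective.prodMap hη.pow_val_injective),
    ← Nat.card_coe_set_eq, SetLike.coe_sort_coe]
  refine Nat.eq_of_mul_eq_mul_right (Nat.pos_of_ne_zero (right_ne_zero_of_mul hMt)) ?_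
  rw [ZMod.card_ker_modEqDefectHom_mul]
  ring

end

namespace DuttaPaper

theorem stmt_2_general (K : Type) [Field K]
    (m n : ℕ) (hm : 0 < m) (hn : 0 < n) (α β : K)
    (hα : IsPrimitiveRoot α m) (hβ : IsPrimitiveRoot β n)
    (i j t x : ℕ)
    (him : i ∣ m) (hjn : j ∣ n)
    (M N : ℕ)
    (hMt : m / i = M * t) (hNt : n / j = N * t) :
    Set.ncard {p : K × K | Hmem α β i j t x p} = M * N * t := by
  have hm' : m = i * (M * t) := by rw [← hMt, Nat.mul_div_cancel' him]
  have hn' : n = j * (N * t) := by rw [← hNt, Nat.mul_div_cancel' hjn]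
  have hH : {p : K × K | Hmem α β i j t x p} =
      {p | ∃ a b : ℤ, b ≡ a * x [ZMOD t] ∧ p = ((α ^ i) ^ a, (β ^ j) ^ b)} := by
    simp only [Hmem, mul_comm _ (i : ℤ), mul_comm _ (j : ℤ), zpow_mul, zpow_natCast]
  rw [hH]
  exact ncard_setOf_zpow_pair_modEq (hα.pow hm hm') (hβ.pow hn hn')
    (right_ne_zero_of_mul (hm' ▸ hm.ne')) (right_ne_zero_of_mul (hn' ▸ hn.ne')) x

/-- if `gcd(m/i, n/j) = t`, `m/i = M t`, `n/j = N t` with `gcd(M,N) = 1`,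
then `|H_{i,j,t,x}| = M N t`. -/
theorem stmt_2 (K : Type) [Field K] [IsAlgClosed K] [CharZero K]
    (m n : ℕ) (hm : 0 < m) (hn : 0 < n) (α β : K)
    (hα : IsPrimitiveRoot α m) (hβ : IsPrimitiveRoot β n)
    (i j t x : ℕ) (hi : 0 < i) (hj : 0 < j) (ht : 0 < t)
    (him : i ∣ m) (hjn : j ∣ n) (hti : t ∣ m / i) (htj : t ∣ n / j)
    (hxt : Nat.gcd x t = 1) (hx1 : 1 ≤ x) (hxle : x ≤ t)
    (hgcd : Nat.gcd (m / i) (n / j) = t)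
    (M N : ℕ) (hM : 0 < M) (hN : 0 < N)
    (hMt : m / i = M * t) (hNt : n / j = N * t) (hMN : Nat.gcd M N = 1) :
    Set.ncard {p : K × K | Hmem α β i j t x p} = M * N * t :=
  stmt_2_general K m n hm hn α β hα hβ i j t x him hjn M N hMt hNt

end DuttaPaper
end
end

section
/- Suppose ν has a generating sequence Q_0 = X, Q_1 = Y, Q_2, … in which every Q_l is an eigenfunction for H_{i,j,t,x}. Then the valuation semigroup of the localized invariant ring is S^{(A_{i,j,t,x})_𝔫}(ν) = { l γ_0 + j_1 γ_1 + ⋯ + j_r γ_r : l ∈ ℕ, r ∈ ℕ, 0 ≤ j_k < m̄_k for k = 1, …, r, and α^{l a i} β^{b j (Σ_{k=1}^{r} j_k d(k))} = 1 for all integers a, b with b ≡ a x (mod t) }. -/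
open MvPolynomial Finset Pointwise

noncomputable section

namespace DuttaPaper

variable {K : Type} [Field K]

/-!
Each `Q_k` with `k ≥ 1` is monic of degree `d(k)` in `Y`, so as an eigenfunction of `(u, v)` its
eigenvalue is `v ^ d(k)`; hence the monomial `X^l Q_1^{j_1} ⋯ Q_r^{j_r}` is an eigenfunction with
eigenvalue `u ^ l * v ^ (Σ j_k d(k))`. Applying `(u, v) ∈ H` to the unique expansion of an invariant
`f` in admissible monomials and comparing coefficients shows that every monomial occurring in it is
invariant; in particular so is the one realising `ν(f)`. Conversely, an invariant monomial lies in
`A` and has value `l γ_0 + Σ j_k γ_k`, while the denominators, being units of `R_𝔪`, have value `0`.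
-/

namespace RatVal

variable {L : Type} [Field L] (ν : RatVal L)

theorem v_one : ν.v 1 = 0 := by
  have h := ν.v_mul 1 1 one_ne_zero one_ne_zero
  rw [mul_one] at h
  linarith

theorem v_neg {z : L} (hz : z ≠ 0) : ν.v (-z) = ν.v z := by
  have h := ν.v_mul (-1) (-1) (neg_ne_zero.2 one_ne_zero) (neg_ne_zero.2 one_ne_zero)
  rw [neg_one_mul, neg_neg, v_one] at h
  rw [← neg_one_mul, ν.v_mul _ _ (neg_ne_zero.2 one_ne_zero) hz]
  linarith

theorem v_pow {z : L} (hz : z ≠ 0) (n : ℕ) : ν.v (z ^ n) = n * ν.v z := by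
  induction n with
  | zero => simp [v_one]
  | succ n ih =>
    rw [pow_succ, ν.v_mul _ _ (pow_ne_zero n hz) hz, ih]
    push_cast
    ring

theorem v_prod {ι : Type} (s : Finset ι) (z : ι → L) (hz : ∀ k ∈ s, z k ≠ 0) :
    ν.v (∏ k ∈ s, z k) = ∑ k ∈ s, ν.v (z k) := by
  classical
  induction s using Finset.induction with
  | empty => simp [v_one]
  | insert a s ha ih =>
    rw [prod_insert ha, sum_insert ha,
      ν.v_mul _ _ (hz a (mem_insert_self a s))
        (prod_ne_zero_iff.2 fun k hk => hz k (mem_insert_of_mem hk)),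
      ih fun k hk => hz k (mem_insert_of_mem hk)]

theorem v_add_eq_of_lt {a b : L} (ha : a ≠ 0) (hb : b ≠ 0) (hab : ν.v a < ν.v b) :
    ν.v (a + b) = ν.v a := by
  have hsum : a + b ≠ 0 := fun h => by
    rw [add_eq_zero_iff_eq_neg.1 h, v_neg ν hb] at hab
    exact lt_irrefl _ hab
  have hge := ν.v_add a b ha hb hsum
  have hle := ν.v_add (a + b) (-b) hsum (neg_ne_zero.2 hb) (by simpa using ha)
  rw [add_neg_cancel_right, v_neg ν hb] at hle
  rw [min_eq_left hab.le] at hge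
  rcases min_le_iff.1 hle with h | h <;> linarith

end RatVal

theorem algebraMap_RF_ne_zero {f : Poly K} (hf : f ≠ 0) : algebraMap (Poly K) (RF K) f ≠ 0 :=
  (map_ne_zero_iff _ (IsFractionRing.injective (Poly K) (RF K))).2 hf

theorem vP_one (ν : RatVal (RF K)) : vP ν 1 = 0 := by
  rw [vP, map_one, ν.v_one]

theorem vP_C {ν : RatVal (RF K)} (hdom : DominatesRm ν) {c : K} (hc : c ≠ 0) :
    vP ν (C c) = 0 := by
  have hc' : (C c : Poly K) ≠ 0 := C_ne_zero.2 hc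
  have hc'' : (C c⁻¹ : Poly K) ≠ 0 := C_ne_zero.2 (inv_ne_zero hc)
  have h := ν.v_mul _ _ (algebraMap_RF_ne_zero hc') (algebraMap_RF_ne_zero hc'')
  rw [← map_mul, ← C_mul, mul_inv_cancel₀ hc, C_1, map_one, ν.v_one] at h
  have h₁ := hdom.1 _ hc'
  have h₂ := hdom.1 _ hc''
  unfold vP at h₁ h₂ ⊢
  linarith

-- `g = g(0) + (g - g(0))` with `ν(g(0)) = 0 < ν(g - g(0))`.
theorem vP_eq_zero_of_constantCoeff_ne_zero {ν : RatVal (RF K)} (hdom : DominatesRm ν)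
    {g : Poly K} (hg : constantCoeff g ≠ 0) : vP ν g = 0 := by
  have hc := vP_C hdom hg
  by_cases h : g - C (constantCoeff g) = 0
  · rwa [sub_eq_zero.1 h]
  have hpos := hdom.2 _ h (by simp)
  unfold vP at hc hpos ⊢
  have key := ν.v_add_eq_of_lt (algebraMap_RF_ne_zero (C_ne_zero.2 hg))
    (algebraMap_RF_ne_zero h) (hc ▸ hpos)
  rwa [← map_add, add_sub_cancel, hc] at key

theorem act_monomial (u v : K) (s : Fin 2 →₀ ℕ) (c : K) :
    act u v (monomial s c) = monomial s (u ^ s 0 * v ^ s 1 * c) := by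
  rw [act, aeval_monomial, Finsupp.prod_fintype _ _ fun _ => pow_zero _, Fin.prod_univ_two]
  simp only [Matrix.cons_val_zero, Matrix.cons_val_one, mul_pow, ← C_pow, algebraMap_eq]
  rw [monomial_eq, Finsupp.prod_fintype _ _ fun _ => pow_zero _, Fin.prod_univ_two,
    C_mul, C_mul]
  ring

theorem coeff_act (u v : K) (f : Poly K) (s : Fin 2 →₀ ℕ) :
    coeff s (act u v f) = u ^ s 0 * v ^ s 1 * coeff s f := by
  induction f using MvPolynomial.induction_on' with
  | monomial s' c =>
    rw [act_monomial, coeff_monomial, coeff_monomial]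
    split_ifs with h
    · rw [h]
    · rw [mul_zero]
  | add p q hp hq => rw [map_add, coeff_add, coeff_add, hp, hq, mul_add]

theorem act_X_zero (u v : K) : act u v (X 0) = u • X 0 := by
  simp [act, smul_eq_C_mul]

theorem _root_.AlgHom.map_prod_pow_of_eigen {R A ι : Type*} [CommSemiring R] [CommSemiring A]
    [Algebra R A] (φ : A →ₐ[R] A) (s : Finset ι) (g : ι → A) (lam : ι → R) (n : ι → ℕ)
    (h : ∀ k ∈ s, φ (g k) = lam k • g k) :
    φ (∏ k ∈ s, g k ^ n k) = (∏ k ∈ s, lam k ^ n k) • ∏ k ∈ s, g k ^ n k := by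
  rw [map_prod, ← prod_smul]
  exact prod_congr rfl fun k hk => by rw [map_pow, h k hk, smul_pow]

def Qmon (G : GSData K) (l r : ℕ) (jj : ℕ → ℕ) : Poly K :=
  G.Q 0 ^ l * ∏ k ∈ Icc 1 r, G.Q k ^ jj k

theorem Pmon_eq_Qmon (G : GSData K) (e : ℕ →₀ ℕ) :
    Pmon G e = Qmon G (e 0) (e.support.sup id) e := by
  have hsub : e.support ⊆ insert 0 (Icc 1 (e.support.sup id)) := fun k hk => by
    rcases Nat.eq_zero_or_pos k with rfl | h
    · exact mem_insert_self _ _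
    · exact mem_insert_of_mem (mem_Icc.2 ⟨h, le_sup (f := id) hk⟩)
  rw [Pmon, Finsupp.prod_of_support_subset e hsub _ fun _ _ => pow_zero _,
    prod_insert (by simp), Qmon]

namespace IsGenSeq

variable {ν : RatVal (RF K)} {G : GSData K}

theorem coeff_Q (hG : IsGenSeq ν G) {k : ℕ} (hk : 1 ≤ k) :
    coeff (Finsupp.single 1 (G.d k)) (G.Q k) = 1 := by
  have hd : 0 < G.d k := prod_pos fun l hl => hG.hmbar_pos l (mem_Icc.1 hl).1
  have hY : coeff (Finsupp.single 1 (G.d k)) ((X 1 : Poly K) ^ G.d k) = 1 := by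
    simp [coeff_X_pow]
  rcases hG.hmonic k hk with h | h
  · rw [sub_eq_zero.1 h, hY]
  · have h0 : coeff (Finsupp.single 1 (G.d k)) (G.Q k - X 1 ^ G.d k) = 0 := by
      by_contra hc
      simpa using (degreeOf_lt_iff hd).1 h _ (mem_support_iff.2 hc)
    rwa [coeff_sub, hY, sub_eq_zero] at h0

theorem Q_ne_zero (hG : IsGenSeq ν G) (k : ℕ) : G.Q k ≠ 0 := by
  rcases Nat.eq_zero_or_pos k with rfl | hk
  · rw [hG.hQ0]
    exact X_ne_zero 0
  · intro h
    simpa [h] using hG.coeff_Q hk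

theorem act_Q_of_isEigen (hG : IsGenSeq ν G) {u v : K} {k : ℕ} (hk : 1 ≤ k)
    (h : ∃ lam : K, act u v (G.Q k) = lam • G.Q k) : act u v (G.Q k) = v ^ G.d k • G.Q k := by
  obtain ⟨lam, hlam⟩ := h
  have hc := congrArg (coeff (Finsupp.single 1 (G.d k))) hlam
  rw [coeff_act, coeff_smul, hG.coeff_Q hk] at hc
  simp only [Finsupp.single_apply, smul_eq_mul] at hc
  norm_num at hc
  rw [hlam, hc]

theorem Qmon_ne_zero (hG : IsGenSeq ν G) (l r : ℕ) (jj : ℕ → ℕ) : Qmon G l r jj ≠ 0 :=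
  mul_ne_zero (pow_ne_zero _ (hG.Q_ne_zero 0))
    (prod_ne_zero_iff.2 fun k _ => pow_ne_zero _ (hG.Q_ne_zero k))

theorem vP_Qmon (hG : IsGenSeq ν G) (l r : ℕ) (jj : ℕ → ℕ) :
    vP ν (Qmon G l r jj) = l * G.γ ν 0 + ∑ k ∈ Icc 1 r, (jj k : ℚ) * G.γ ν k := by
  have hQ k : algebraMap (Poly K) (RF K) (G.Q k) ≠ 0 := algebraMap_RF_ne_zero (hG.Q_ne_zero k)
  rw [vP, Qmon, map_mul, map_pow, map_prod, ν.v_mul _ _ (pow_ne_zero _ (hQ 0))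
    (prod_ne_zero_iff.2 fun k _ => by simpa using pow_ne_zero _ (hQ k)), ν.v_pow (hQ 0),
    ν.v_prod _ _ fun k _ => by simpa using pow_ne_zero _ (hQ k)]
  simp only [map_pow, ν.v_pow (hQ _)]
  rfl

theorem vP_Pmon (hG : IsGenSeq ν G) (e : ℕ →₀ ℕ) : vP ν (Pmon G e) = evalγ ν G e := by
  have hQ k : algebraMap (Poly K) (RF K) (G.Q k) ≠ 0 := algebraMap_RF_ne_zero (hG.Q_ne_zero k)
  rw [vP, Pmon, Finsupp.prod, map_prod,
    ν.v_prod _ _ fun k _ => by simpa using pow_ne_zero _ (hQ k)]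
  simp only [map_pow, ν.v_pow (hQ _)]
  rfl

theorem act_Qmon (hG : IsGenSeq ν G) {u v : K}
    (heig : ∀ k, 1 ≤ k → ∃ lam : K, act u v (G.Q k) = lam • G.Q k) (l r : ℕ) (jj : ℕ → ℕ) :
    act u v (Qmon G l r jj) = (u ^ l * v ^ ∑ k ∈ Icc 1 r, jj k * G.d k) • Qmon G l r jj := by
  rw [Qmon, map_mul, map_pow, hG.hQ0, act_X_zero, smul_pow,
    (act u v).map_prod_pow_of_eigen _ _ _ _ fun k hk =>
      hG.act_Q_of_isEigen (mem_Icc.1 hk).1 (heig k (mem_Icc.1 hk).1),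
    smul_mul_smul_comm, ← prod_pow_eq_pow_sum]
  simp only [← pow_mul, mul_comm]

theorem map_Pmon_eq_of_mem_support (hG : IsGenSeq ν G) (φ : Poly K →ₐ[K] Poly K)
    (hφ : ∀ e, ∃ lam : K, φ (Pmon G e) = lam • Pmon G e) {f : Poly K} (hf : f ≠ 0)
    (hfix : φ f = f) {c : (ℕ →₀ ℕ) →₀ K} (hadm : ∀ e ∈ c.support, Adm G e)
    (hsum : f = c.sum fun e a => C a * Pmon G e) {e : ℕ →₀ ℕ} (he : e ∈ c.support) :
    φ (Pmon G e) = Pmon G e := by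
  choose lam hlam using hφ
  let c' : (ℕ →₀ ℕ) →₀ K := Finsupp.onFinset c.support (fun e => lam e * c e) fun e h =>
    Finsupp.mem_support_iff.2 (right_ne_zero_of_mul h)
  have hsum' : f = c'.sum fun e a => C a * Pmon G e := by
    rw [Finsupp.onFinset_sum _ fun _ => by rw [C_0, zero_mul]]
    conv_lhs => rw [← hfix, hsum, Finsupp.sum, map_sum]
    refine sum_congr rfl fun e _ => ?_
    rw [← smul_eq_C_mul, map_smul, hlam, smul_smul, smul_eq_C_mul, mul_comm (c e)]
  have hc : c' = c := (hG.hexpand f hf).unique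
    ⟨fun e he => hadm e (Finsupp.support_onFinset_subset he), hsum'⟩ ⟨hadm, hsum⟩
  have hlam1 : lam e = 1 := by
    have h : lam e * c e = c e := by
      simpa [c', Finsupp.onFinset_apply] using DFunLike.congr_fun hc e
    exact (mul_eq_right₀ (Finsupp.mem_support_iff.1 he)).1 h
  rw [hlam, hlam1, one_smul]

theorem invariant_Qmon_iff (hG : IsGenSeq ν G) {α β : K} {i j t x : ℕ}
    (heig : ∀ l, IsEigen α β i j t x (G.Q l)) (l r : ℕ) (jj : ℕ → ℕ) :
    Invariant α β i j t x (Qmon G l r jj) ↔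
      ∀ a b : ℤ, b ≡ a * (x : ℤ) [ZMOD (t : ℤ)] →
        α ^ ((l : ℤ) * a * (i : ℤ)) *
          β ^ (b * (j : ℤ) * ∑ k ∈ Icc 1 r, (jj k : ℤ) * (G.d k : ℤ)) = 1 := by
  have hchar (a b : ℤ) :
      (α ^ (a * (i : ℤ))) ^ l * (β ^ (b * (j : ℤ))) ^ ∑ k ∈ Icc 1 r, jj k * G.d k =
        α ^ ((l : ℤ) * a * (i : ℤ)) *
          β ^ (b * (j : ℤ) * ∑ k ∈ Icc 1 r, (jj k : ℤ) * (G.d k : ℤ)) := by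
    rw [← zpow_natCast, ← zpow_natCast, ← zpow_mul, ← zpow_mul]
    push_cast
    ring_nf
  have hfix (a b : ℤ) (hab : b ≡ a * (x : ℤ) [ZMOD (t : ℤ)]) :
      act (α ^ (a * (i : ℤ))) (β ^ (b * (j : ℤ))) (Qmon G l r jj) = Qmon G l r jj ↔
        α ^ ((l : ℤ) * a * (i : ℤ)) *
          β ^ (b * (j : ℤ) * ∑ k ∈ Icc 1 r, (jj k : ℤ) * (G.d k : ℤ)) = 1 := by
    rw [hG.act_Qmon (fun k _ => heig k _ ⟨a, b, hab, rfl⟩), hchar,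
      ← (smul_left_injective K (hG.Qmon_ne_zero l r jj)).eq_iff, one_smul]
  constructor
  · intro h a b hab
    exact (hfix a b hab).1 (h (α ^ (a * (i : ℤ)), β ^ (b * (j : ℤ))) ⟨a, b, hab, rfl⟩)
  · rintro h _ ⟨a, b, hab, rfl⟩
    exact (hfix a b hab).2 (h a b hab)

theorem invariant_Pmon_of_mem_support (hG : IsGenSeq ν G) {α β : K} {i j t x : ℕ}
    (heig : ∀ l, IsEigen α β i j t x (G.Q l)) {f : Poly K} (hf : f ≠ 0)
    (hfi : Invariant α β i j t x f) {c : (ℕ →₀ ℕ) →₀ K} (hadm : ∀ e ∈ c.support, Adm G e)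
    (hsum : f = c.sum fun e a => C a * Pmon G e) {e : ℕ →₀ ℕ} (he : e ∈ c.support) :
    Invariant α β i j t x (Pmon G e) := fun p hp =>
  hG.map_Pmon_eq_of_mem_support (act p.1 p.2)
    (fun e => ⟨_, by rw [Pmon_eq_Qmon, hG.act_Qmon fun k _ => heig k p hp]⟩)
    hf (hfi p hp) hadm hsum he

end IsGenSeq

theorem stmt_3_general (K : Type) [Field K] (α β : K) (i j t x : ℕ)
    (ν : RatVal (RF K)) (hdom : DominatesRm ν) (G : GSData K) (hG : IsGenSeq ν G)
    (heig : ∀ l, IsEigen α β i j t x (G.Q l)) :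
    SA ν α β i j t x =
      {q : ℚ | ∃ (l r : ℕ) (jj : ℕ → ℕ),
        (∀ k, 1 ≤ k → k ≤ r → jj k < G.mbar k) ∧
        q = (l : ℚ) * G.γ ν 0 + ∑ k ∈ Finset.Icc 1 r, (jj k : ℚ) * G.γ ν k ∧
        ∀ a b : ℤ, b ≡ a * (x : ℤ) [ZMOD (t : ℤ)] →
          α ^ ((l : ℤ) * a * (i : ℤ)) *
            β ^ (b * (j : ℤ) * ∑ k ∈ Finset.Icc 1 r, (jj k : ℤ) * (G.d k : ℤ)) = 1} := by
  ext q
  constructor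
  · rintro ⟨f, g, hf, hfi, -, hg, rfl⟩
    obtain ⟨c, ⟨hadm, hsum⟩, -⟩ := hG.hexpand f hf
    obtain ⟨-, e, he, hfe, -⟩ := hG.hval f hf c hadm hsum
    have hinv := hG.invariant_Pmon_of_mem_support heig hf hfi hadm hsum he
    rw [Pmon_eq_Qmon, hG.invariant_Qmon_iff heig] at hinv
    refine ⟨e 0, _, e, fun k hk _ => hadm e he k hk, ?_, hinv⟩
    rw [vP_eq_zero_of_constantCoeff_ne_zero hdom hg, sub_zero, hfe, ← hG.vP_Pmon, Pmon_eq_Qmon,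
      hG.vP_Qmon]
  · rintro ⟨l, r, jj, -, rfl, hchar⟩
    refine ⟨Qmon G l r jj, 1, hG.Qmon_ne_zero l r jj, (hG.invariant_Qmon_iff heig l r jj).2 hchar,
      fun _ _ => map_one _, by simp, ?_⟩
    rw [hG.vP_Qmon, vP_one, sub_zero]

/-- description of the valuation semigroup of the localized invariant ring. -/
theorem stmt_3 (K : Type) [Field K] [IsAlgClosed K] [CharZero K]
    (m n : ℕ) (hm : 0 < m) (hn : 0 < n) (α β : K)
    (hα : IsPrimitiveRoot α m) (hβ : IsPrimitiveRoot β n)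
    (i j t x : ℕ) (hi : 0 < i) (hj : 0 < j) (ht : 0 < t)
    (him : i ∣ m) (hjn : j ∣ n) (hti : t ∣ m / i) (htj : t ∣ n / j)
    (hxt : Nat.gcd x t = 1) (hx1 : 1 ≤ x) (hxle : x ≤ t)
    (ν : RatVal (RF K)) (hdom : DominatesRm ν) (hnd : Nondiscrete ν)
    (G : GSData K) (hG : IsGenSeq ν G)
    (heig : ∀ l, IsEigen α β i j t x (G.Q l)) :
    SA ν α β i j t x =
      {q : ℚ | ∃ (l r : ℕ) (jj : ℕ → ℕ),
        (∀ k, 1 ≤ k → k ≤ r → jj k < G.mbar k) ∧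
        q = (l : ℚ) * G.γ ν 0 + ∑ k ∈ Finset.Icc 1 r, (jj k : ℚ) * G.γ ν k ∧
        ∀ a b : ℤ, b ≡ a * (x : ℤ) [ZMOD (t : ℤ)] →
          α ^ ((l : ℤ) * a * (i : ℤ)) *
            β ^ (b * (j : ℤ) * ∑ k ∈ Finset.Icc 1 r, (jj k : ℤ) * (G.d k : ℤ)) = 1} :=
  stmt_3_general K α β i j t x ν hdom G hG heig

end DuttaPaper
end
end
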